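/- The maps ι and g are mutually inverse bijections: ι(g(T)) = T for every standard n-multitableau T with entries in {1,…,s}, each entry occurring, all residues in {1,…,m−1}; and g(ι(P,f)) = (P,f) for every flow f on a valid ladder presentation P of length s. Hence ι is a bijection between the set of pairs (valid ladder presentation of length s for parameters n, ℓ, m, flow on it) and the set of standard n-multitableaux with entries in {1,…,s}, each entry occurring, all residues in {1,…,m−1}. -/
import Mathlib


open scoped Classical

namespace SlnWeb

noncomputable section

/-- `p r` is the length of the `r`-th row (0-indexed) of a Young diagram. -/
def IsPartition (p : ℕ → ℕ) : Prop :=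
  Antitone p ∧ ∃ N, p N = 0

/-- The 0-indexed cell `(r, c)` lies in the Young diagram of `p`. -/
def InDiag (p : ℕ → ℕ) (r c : ℕ) : Prop :=
  c < p r

/-- Residue (with shift `ℓ`) of the 0-indexed cell `(r, c)`; for the
corresponding 1-indexed cell `(r+1, c+1)` this is `(c+1) - (r+1) + ℓ`. -/
def resOf (ℓ : ℕ) (r c : ℕ) : ℤ :=
  (c : ℤ) - (r : ℤ) + (ℓ : ℤ)

/-- `(r, c)` (0-indexed) is an addable cell of `p`. -/
def IsAddableCell (p : ℕ → ℕ) (r c : ℕ) : Prop :=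
  c = p r ∧ (r = 0 ∨ p r < p (r - 1))

/-- `(r, c)` (0-indexed) is a removable cell of `p`. -/
def IsRemovableCell (p : ℕ → ℕ) (r c : ℕ) : Prop :=
  c + 1 = p r ∧ p (r + 1) < p r

/-- Add to `p` its (unique) addable cell of residue `k`, if there is one. -/
def addRes (ℓ : ℕ) (p : ℕ → ℕ) (k : ℤ) : ℕ → ℕ :=
  if h : ∃ r, (r = 0 ∨ p r < p (r - 1)) ∧ (p r : ℤ) - (r : ℤ) + (ℓ : ℤ) = k then
    Function.update p h.choose (p h.choose + 1)
  else p

/-- A multitableau: `shape t r` is the length of the `r`-th row (0-indexed) of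
the `t`-th component (components are indexed by `t ∈ {1,…,n}`), and
`entry t r c` is the entry of the 0-indexed cell `(r, c)` of the `t`-th
component; everything is normalised to `0` outside of the diagrams. -/
structure MultiTableau where
  shape : ℕ → ℕ → ℕ
  entry : ℕ → ℕ → ℕ → ℕ

/-- A standard `n`-multitableau with entries in `{1,…,s}` (residue shift `ℓ`):
each component is a partition, components are normalised to be empty outside
of `{1,…,n}`, entries lie in `{1,…,s}` and are normalised to `0` outside the
diagram, entries strictly increase along rows and down columns, no entry is
repeated inside a single component, and all nodes carrying the same entry have
the same residue. -/
def IsStandard (n ℓ s : ℕ) (M : MultiTableau) : Prop :=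
  (∀ t, IsPartition (M.shape t)) ∧
  (∀ t, (t = 0 ∨ n < t) → ∀ r, M.shape t r = 0) ∧
  (∀ t r c, InDiag (M.shape t) r c → 1 ≤ M.entry t r c ∧ M.entry t r c ≤ s) ∧
  (∀ t r c, ¬ InDiag (M.shape t) r c → M.entry t r c = 0) ∧
  (∀ t r c c', c < c' → InDiag (M.shape t) r c' → M.entry t r c < M.entry t r c') ∧
  (∀ t r r' c, r < r' → InDiag (M.shape t) r' c → M.entry t r c < M.entry t r' c) ∧
  (∀ t r c r' c', InDiag (M.shape t) r c → InDiag (M.shape t) r' c' →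
    M.entry t r c = M.entry t r' c' → r = r' ∧ c = c') ∧
  (∀ t r c t' r' c', InDiag (M.shape t) r c → InDiag (M.shape t') r' c' →
    M.entry t r c = M.entry t' r' c' → resOf ℓ r c = resOf ℓ r' c')

/-- A ladder presentation of length `s` for the parameters `n`, `ℓ`, `m`:
the `r`-th step is `F_{i_r}^{(j_r)}` with `i_r = res r ∈ {1,…,m-1}` and
`j_r = mult r ∈ {1,…,n}`. -/
structure LadderPresentation (n ℓ m s : ℕ) where
  res : Fin s → ℕ
  mult : Fin s → ℕ
  res_pos : ∀ r, 1 ≤ res r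
  res_lt : ∀ r, res r < m
  mult_pos : ∀ r, 1 ≤ mult r
  mult_le : ∀ r, mult r ≤ n

/-- The weight sequence `k⁽⁰⁾, k⁽¹⁾, …` of a ladder presentation; positions `p`
are 1-indexed, `k⁽⁰⁾ = (n^ℓ)` and `k⁽ʳ⁾ = k⁽ʳ⁻¹⁾ - j_r·e_{i_r} + j_r·e_{i_r+1}`. -/
def wtSeq {n ℓ m s : ℕ} (P : LadderPresentation n ℓ m s) : ℕ → ℕ → ℤ
  | 0, p => if 1 ≤ p ∧ p ≤ ℓ then (n : ℤ) else 0
  | r + 1, p =>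
    if h : r < s then
      wtSeq P r p - (if p = P.res ⟨r, h⟩ then (P.mult ⟨r, h⟩ : ℤ) else 0) +
        (if p = P.res ⟨r, h⟩ + 1 then (P.mult ⟨r, h⟩ : ℤ) else 0)
    else wtSeq P r p

/-- A ladder presentation is valid if every entry of every weight in its weight
sequence lies in `{0,…,n}`. -/
def IsValid {n ℓ m s : ℕ} (P : LadderPresentation n ℓ m s) : Prop :=
  ∀ r, r ≤ s → ∀ p, 1 ≤ p → p ≤ m → 0 ≤ wtSeq P r p ∧ wtSeq P r p ≤ (n : ℤ)

/-- A flow on a (valid) ladder presentation `P`.  `S r p ⊆ {1,…,n}` is the flow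
label of the `p`-th boundary point after `r` steps (normalised to `∅` outside
`p ∈ {1,…,m}`), and `T r` is the flow label of the rung of the `r`-th ladder. -/
structure LadderFlow {n ℓ m s : ℕ} (P : LadderPresentation n ℓ m s) where
  S : Fin (s + 1) → ℕ → Finset ℕ
  T : Fin s → Finset ℕ
  S_sub : ∀ r p, S r p ⊆ Finset.Icc 1 n
  S_outside : ∀ r p, (p = 0 ∨ m < p) → S r p = ∅
  S_card : ∀ r p, 1 ≤ p → p ≤ m → ((S r p).card : ℤ) = wtSeq P r.val p
  S_init : ∀ p, 1 ≤ p → p ≤ m → S 0 p = if p ≤ ℓ then Finset.Icc 1 n else ∅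
  T_sub : ∀ r : Fin s, T r ⊆ S r.castSucc (P.res r)
  T_card : ∀ r : Fin s, (T r).card = P.mult r
  T_disj : ∀ r : Fin s, Disjoint (T r) (S r.castSucc (P.res r + 1))
  S_step_res : ∀ r : Fin s, S r.succ (P.res r) = S r.castSucc (P.res r) \ T r
  S_step_res1 : ∀ r : Fin s, S r.succ (P.res r + 1) = S r.castSucc (P.res r + 1) ∪ T r
  S_step_other : ∀ r : Fin s, ∀ p, p ≠ P.res r → p ≠ P.res r + 1 →
    S r.succ p = S r.castSucc p

/-- Add, for every component `t ∈ Tset`, the (unique) addable cell of residue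
`k` of that component, giving each of the new cells the entry `e`. -/
def stepAdd (ℓ : ℕ) (k : ℤ) (e : ℕ) (Tset : Finset ℕ) (M : MultiTableau) :
    MultiTableau where
  shape := fun t => if t ∈ Tset then addRes ℓ (M.shape t) k else M.shape t
  entry := fun t r c =>
    if t ∈ Tset ∧ M.shape t r ≤ c ∧ c < addRes ℓ (M.shape t) k r then e
    else M.entry t r c

/-- The sequence of intermediate multitableaux built by the filling map `ι`:
at step `r` (0-indexed), for each `t ∈ T r`, the unique addable node of residue
`i_r` is added to the `t`-th component, with entry `r + 1`. -/
def iotaAux {n ℓ m s : ℕ} (P : LadderPresentation n ℓ m s) (f : LadderFlow P) :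
    ℕ → MultiTableau
  | 0 => ⟨fun _ _ => 0, fun _ _ _ => 0⟩
  | r + 1 =>
    if h : r < s then
      stepAdd ℓ (P.res ⟨r, h⟩ : ℤ) (r + 1) (f.T ⟨r, h⟩) (iotaAux P f r)
    else iotaAux P f r

/-- The filling map `ι`. -/
def iotaMap {n ℓ m s : ℕ} (P : LadderPresentation n ℓ m s) (f : LadderFlow P) :
    MultiTableau :=
  iotaAux P f s

/-- Every entry of `{1,…,s}` occurs in `M`. -/
def AllEntriesOccur (s : ℕ) (M : MultiTableau) : Prop :=
  ∀ e, 1 ≤ e → e ≤ s → ∃ t r c, InDiag (M.shape t) r c ∧ M.entry t r c = e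

/-- All nodes of `M` have residue in `{1,…,m-1}`. -/
def ResInRange (ℓ m : ℕ) (M : MultiTableau) : Prop :=
  ∀ t r c, InDiag (M.shape t) r c → 1 ≤ resOf ℓ r c ∧ resOf ℓ r c ≤ (m : ℤ) - 1

/-- `(P, f)` is the image of the multitableau `M` under the growth map `g`:
`i_r` is the common residue of the nodes of `M` with entry `r`, and `T r` is
the set of components of `M` containing a node with entry `r` (the remaining
data of `f`, i.e. the tuples `S`, is forced by the flow conditions, and
`j_r = |T r|` is forced by the flow condition `T_card`). -/
def GrowthData {n ℓ m s : ℕ} (M : MultiTableau) (P : LadderPresentation n ℓ m s)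
    (f : LadderFlow P) : Prop :=
  (∀ r : Fin s, ∀ t r' c, InDiag (M.shape t) r' c → M.entry t r' c = r.val + 1 →
    (P.res r : ℤ) = resOf ℓ r' c) ∧
  (∀ r : Fin s, ∀ t,
    t ∈ f.T r ↔ ∃ r' c, InDiag (M.shape t) r' c ∧ M.entry t r' c = r.val + 1)

/-- `#{(a,b) ∈ A × B : a < b}`. -/
def inv2 (A B : Finset ℕ) : ℕ :=
  ((A ×ˢ B).filter fun ab => ab.1 < ab.2).card

/-- The weight of a flow:
`wt(f) = Σ_r ( inv(S⁽ʳ⁾_{i_r}, T_r) − inv(S⁽ʳ⁻¹⁾_{i_r+1}, T_r) )`. -/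
def wtFlow {n ℓ m s : ℕ} (P : LadderPresentation n ℓ m s) (f : LadderFlow P) : ℤ :=
  ∑ r : Fin s,
    ((inv2 (f.S r.succ (P.res r)) (f.T r) : ℤ) -
      (inv2 (f.S r.castSucc (P.res r + 1)) (f.T r) : ℤ))

/-- The components of `M` (among `{1,…,n}`) containing a node with entry `j`. -/
def compsWith (n : ℕ) (M : MultiTableau) (j : ℕ) : Finset ℕ :=
  (Finset.Icc 1 n).filter fun t => ∃ r c, InDiag (M.shape t) r c ∧ M.entry t r c = j

/-- The shape of `M` with all entries `> j` removed, where moreover in the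
components outside `Keep` the nodes with entry `j` are removed as well. -/
def shapeTrunc (M : MultiTableau) (j : ℕ) (Keep : Finset ℕ) : ℕ → ℕ → ℕ :=
  fun t r =>
    ((Finset.range (M.shape t r)).filter fun c =>
      M.entry t r c ≤ (if t ∈ Keep then j else j - 1)).card

/-- The row of the node with entry `j` in component `t` of `M`. -/
def nodeRow (M : MultiTableau) (j t : ℕ) : ℕ :=
  if h : ∃ r c, InDiag (M.shape t) r c ∧ M.entry t r c = j then h.choose else 0

/-- The column of the node with entry `j` in component `t` of `M`. -/
def nodeCol (M : MultiTableau) (j t : ℕ) : ℕ :=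
  if h : ∃ r c, InDiag (M.shape t) r c ∧ M.entry t r c = j then
    h.choose_spec.choose
  else 0

/-- The number of addable nodes of `sh` of residue `ρ` lying strictly after the
position `(t, r)` in the order `⪯` (at most one addable node of a given residue
per component). -/
def cntAddAfter (n ℓ : ℕ) (sh : ℕ → ℕ → ℕ) (ρ : ℤ) (t r : ℕ) : ℕ :=
  ((Finset.Icc 1 n).filter fun t' => ∃ r' c', IsAddableCell (sh t') r' c' ∧
    resOf ℓ r' c' = ρ ∧ (t' < t ∨ (t' = t ∧ r < r'))).card

/-- The number of removable nodes of `sh` of residue `ρ` lying strictly after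
the position `(t, r)` in the order `⪯`. -/
def cntRemAfter (n ℓ : ℕ) (sh : ℕ → ℕ → ℕ) (ρ : ℤ) (t r : ℕ) : ℕ :=
  ((Finset.Icc 1 n).filter fun t' => ∃ r' c', IsRemovableCell (sh t') r' c' ∧
    resOf ℓ r' c' = ρ ∧ (t' < t ∨ (t' = t ∧ r < r'))).card

/-- The contribution `deg(Tʲ)` of the entry `j` to the Brundan–Kleshchev–Wang
degree of the standard multitableau `M`: listing the nodes with entry `j` as
`N₁ ≺ ⋯ ≺ N_t` (i.e. by decreasing component index), it is
`Σ_p (A_p − R_p) − t(t−1)/2`, where `A_p` (resp. `R_p`) is the number of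
addable (resp. removable) nodes of the residue of `N_p`, strictly after `N_p`,
of the multipartition underlying `Tʲ` with the nodes `N_{p+1},…,N_t` removed. -/
def degStep (n ℓ : ℕ) (M : MultiTableau) (j : ℕ) : ℤ :=
  (∑ t ∈ compsWith n M j,
    ((cntAddAfter n ℓ (shapeTrunc M j ((compsWith n M j).filter fun t' => t ≤ t'))
        (resOf ℓ (nodeRow M j t) (nodeCol M j t)) t (nodeRow M j t) : ℤ) -
      (cntRemAfter n ℓ (shapeTrunc M j ((compsWith n M j).filter fun t' => t ≤ t'))
        (resOf ℓ (nodeRow M j t) (nodeCol M j t)) t (nodeRow M j t) : ℤ))) -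
  (((compsWith n M j).card * ((compsWith n M j).card - 1) / 2 : ℕ) : ℤ)

/-- The Brundan–Kleshchev–Wang degree of a standard multitableau with entries
in `{1,…,s}`. -/
def degBKW (n ℓ s : ℕ) (M : MultiTableau) : ℤ :=
  ∑ j ∈ Finset.Icc 1 s, degStep n ℓ M j

/-- `M` has the residue sequence `((i_1,j_1),…,(i_s,j_s))` recorded by `P`:
for each `r`, exactly `j_r` nodes of `M` carry the entry `r` (equivalently,
under standardness, `j_r` components contain the entry `r`) and they all have
residue `i_r`. -/
def HasResSeq {n ℓ m s : ℕ} (P : LadderPresentation n ℓ m s) (M : MultiTableau) :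
    Prop :=
  ∀ r : Fin s,
    (compsWith n M (r.val + 1)).card = P.mult r ∧
    ∀ t r' c, InDiag (M.shape t) r' c → M.entry t r' c = r.val + 1 →
      resOf ℓ r' c = (P.res r : ℤ)

/-- The multipartition `λ(S)` determined by a boundary tuple `S`: writing
`p_1 < ⋯ < p_ℓ` for the elements of `{ p ∈ {1,…,m} : t ∈ S p }`, the `r`-th
part (1-indexed) of its `t`-th component is `p_{ℓ+1−r} − (ℓ+1−r)`. -/
def shapeOfTuple (ℓ m : ℕ) (Sb : ℕ → Finset ℕ) : ℕ → ℕ → ℕ :=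
  fun t r =>
    if r < ℓ then
      (((Finset.Icc 1 m).filter fun p => t ∈ Sb p).sort (· ≤ ·)).getD (ℓ - 1 - r) 0 -
        (ℓ - r)
    else 0


/-! ### Maya diagram correspondence -/

/-- Position of row `j` on the abacus. -/
def posOf (ℓ : ℕ) (sh : ℕ → ℕ) (j : ℕ) : ℕ := sh j + (ℓ - j)

/-- The abacus bead set of a shape. -/
def Aset (ℓ : ℕ) (sh : ℕ → ℕ) : Finset ℕ := (Finset.range ℓ).image (posOf ℓ sh)

/-- A well-formed shape: antitone with at most `ℓ` rows. -/
structure GoodSh (ℓ : ℕ) (sh : ℕ → ℕ) : Prop where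
  anti : Antitone sh
  zero : ∀ j, ℓ ≤ j → sh j = 0

lemma mem_Aset {ℓ : ℕ} {sh : ℕ → ℕ} {v : ℕ} :
    v ∈ Aset ℓ sh ↔ ∃ j, j < ℓ ∧ posOf ℓ sh j = v := by
  simp only [Aset, Finset.mem_image, Finset.mem_range]

lemma posOf_lt_posOf {ℓ : ℕ} {sh : ℕ → ℕ} (h : Antitone sh) {j j' : ℕ}
    (hjj : j < j') (hj' : j' < ℓ) : posOf ℓ sh j' < posOf ℓ sh j := by
  have h1 : sh j' ≤ sh j := h hjj.le
  unfold posOf; omega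

lemma posOf_inj {ℓ : ℕ} {sh : ℕ → ℕ} (h : Antitone sh) {j j' : ℕ}
    (hj : j < ℓ) (hj' : j' < ℓ) (he : posOf ℓ sh j = posOf ℓ sh j') : j = j' := by
  rcases lt_trichotomy j j' with hlt | heq | hgt
  · have := posOf_lt_posOf h hlt hj'; omega
  · exact heq
  · have := posOf_lt_posOf h hgt hj; omega

lemma posOf_pos {ℓ : ℕ} {sh : ℕ → ℕ} {j : ℕ} (hj : j < ℓ) : 1 ≤ posOf ℓ sh j := by
  unfold posOf; omega

lemma posOf_cast {ℓ : ℕ} {sh : ℕ → ℕ} {j : ℕ} (hj : j < ℓ) :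
    (posOf ℓ sh j : ℤ) = (sh j : ℤ) - j + ℓ := by
  unfold posOf; omega

/-- Rows are determined by their (addable-cell) residue. -/
lemma resRow_inj {sh : ℕ → ℕ} (h : Antitone sh) {j j' : ℕ}
    (he : (sh j : ℤ) - j = (sh j' : ℤ) - j') : j = j' := by
  rcases lt_trichotomy j j' with hlt | heq | hgt
  · have := h hlt.le; omega
  · exact heq
  · have := h hgt.le; omega

/-- If row `j*` is a corner row then the position just above `posOf j*` is free. -/
lemma corner_succ_not_mem {ℓ : ℕ} {sh : ℕ → ℕ} (g : GoodSh ℓ sh) {j : ℕ}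
    (hj : j < ℓ) (hc : j = 0 ∨ sh j < sh (j - 1)) :
    posOf ℓ sh j + 1 ∉ Aset ℓ sh := by
  intro hmem
  obtain ⟨j', hj', he⟩ := mem_Aset.1 hmem
  have hlt : j' < j := by
    by_contra hcon
    push_neg at hcon
    rcases eq_or_lt_of_le hcon with rfl | hlt
    · omega
    · have := posOf_lt_posOf g.anti hlt hj'; omega
  have hj0 : 1 ≤ j := by omega
  have hc' : sh j < sh (j - 1) := hc.resolve_left (by omega)
  have h1 : posOf ℓ sh j + 2 ≤ posOf ℓ sh (j - 1) := by
    unfold posOf; omega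
  have h2 : posOf ℓ sh (j - 1) ≤ posOf ℓ sh j' := by
    rcases eq_or_lt_of_le (by omega : j' ≤ j - 1) with rfl | hlt'
    · exact le_rfl
    · exact (posOf_lt_posOf g.anti hlt' (by omega)).le
  omega

/-- Conversely, if the position just above a bead is free, that row is a corner row. -/
lemma corner_of_succ_not_mem {ℓ : ℕ} {sh : ℕ → ℕ} (g : GoodSh ℓ sh) {j : ℕ}
    (hj : j < ℓ) (hnm : posOf ℓ sh j + 1 ∉ Aset ℓ sh) :
    j = 0 ∨ sh j < sh (j - 1) := by
  by_contra hcon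
  push_neg at hcon
  obtain ⟨hj0, hge⟩ := hcon
  have h1 : sh (j - 1) = sh j := le_antisymm hge (g.anti (by omega))
  apply hnm
  exact mem_Aset.2 ⟨j - 1, by omega, by unfold posOf; omega⟩

/-- Existence and uniqueness of the addable row of a given residue. -/
lemma exists_addable_row {ℓ : ℕ} {sh : ℕ → ℕ} (g : GoodSh ℓ sh) {v : ℕ}
    (hv1 : 1 ≤ v) (hv : v ∈ Aset ℓ sh) (hv2 : v + 1 ∉ Aset ℓ sh) :
    ∃ j, j < ℓ ∧ posOf ℓ sh j = v ∧ (j = 0 ∨ sh j < sh (j - 1)) := by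
  obtain ⟨j, hj, he⟩ := mem_Aset.1 hv
  exact ⟨j, hj, he, corner_of_succ_not_mem g hj (he ▸ hv2)⟩

lemma addRes_eq_update {ℓ : ℕ} {sh : ℕ → ℕ} (h : Antitone sh) {j : ℕ}
    (hc : j = 0 ∨ sh j < sh (j - 1)) {k : ℤ} (hres : (sh j : ℤ) - j + ℓ = k) :
    addRes ℓ sh k = Function.update sh j (sh j + 1) := by
  unfold addRes
  have hex : ∃ r, (r = 0 ∨ sh r < sh (r - 1)) ∧ (sh r : ℤ) - (r : ℤ) + (ℓ : ℤ) = k :=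
    ⟨j, hc, hres⟩
  rw [dif_pos hex]
  have hspec := hex.choose_spec
  have : hex.choose = j := resRow_inj h (by omega)
  rw [this]

lemma addRes_eq_self {ℓ : ℕ} {sh : ℕ → ℕ} {k : ℤ}
    (h : ¬ ∃ r, (r = 0 ∨ sh r < sh (r - 1)) ∧ (sh r : ℤ) - (r : ℤ) + (ℓ : ℤ) = k) :
    addRes ℓ sh k = sh := by
  unfold addRes; rw [dif_neg h]

/-- Adding a box moves a bead one step up. -/
lemma Aset_update {ℓ : ℕ} {sh : ℕ → ℕ} (h : Antitone sh) {j : ℕ} (hj : j < ℓ) :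
    Aset ℓ (Function.update sh j (sh j + 1)) =
      insert (posOf ℓ sh j + 1) ((Aset ℓ sh).erase (posOf ℓ sh j)) := by
  ext v
  simp only [mem_Aset, Finset.mem_insert, Finset.mem_erase]
  constructor
  · rintro ⟨j', hj', he⟩
    by_cases hjj : j' = j
    · subst hjj
      left
      rw [← he]; unfold posOf; rw [Function.update_self]; omega
    · right
      rw [show posOf ℓ (Function.update sh j (sh j + 1)) j' = posOf ℓ sh j' by
        unfold posOf; rw [Function.update_of_ne hjj]] at he
      refine ⟨?_, j', hj', he⟩
      intro hcon
      exact hjj (posOf_inj h hj' hj (by omega))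
  · rintro (rfl | ⟨hne, j', hj', he⟩)
    · exact ⟨j, hj, by unfold posOf; rw [Function.update_self]; omega⟩
    · have hjj : j' ≠ j := fun hcon => hne (by rw [← he, hcon])
      exact ⟨j', hj', by
        rw [show posOf ℓ (Function.update sh j (sh j + 1)) j' = posOf ℓ sh j' by
          unfold posOf; rw [Function.update_of_ne hjj]]; exact he⟩

lemma GoodSh_update {ℓ : ℕ} {sh : ℕ → ℕ} (g : GoodSh ℓ sh) {j : ℕ} (hj : j < ℓ)
    (hc : j = 0 ∨ sh j < sh (j - 1)) :
    GoodSh ℓ (Function.update sh j (sh j + 1)) := by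
  constructor
  · apply antitone_nat_of_succ_le
    intro a
    rcases eq_or_ne (a + 1) j with h1 | h1
    · subst h1
      rw [Function.update_self, Function.update_of_ne (by omega)]
      have hc' : sh (a + 1) < sh (a + 1 - 1) := hc.resolve_left (by omega)
      simp only [Nat.add_sub_cancel] at hc'
      omega
    · rw [Function.update_of_ne h1]
      rcases eq_or_ne a j with h2 | h2
      · rw [h2, Function.update_self]
        have : sh (j + 1) ≤ sh j := g.anti (by omega); omega
      · rw [Function.update_of_ne h2]
        exact g.anti (Nat.le_succ a)
  · intro j' hj'
    rw [Function.update_of_ne (by omega)]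
    exact g.zero j' hj'

lemma GoodSh_zero (ℓ : ℕ) : GoodSh ℓ (fun _ => 0) :=
  ⟨antitone_const, fun _ _ => rfl⟩

lemma Aset_zero (ℓ : ℕ) : Aset ℓ (fun _ => 0) = Finset.Icc 1 ℓ := by
  ext v
  simp only [mem_Aset, Finset.mem_Icc, posOf]
  constructor
  · rintro ⟨j, hj, he⟩; omega
  · intro ⟨h1, h2⟩; exact ⟨ℓ - v, by omega, by omega⟩

/-! ### Truncation of a standard multitableau -/

lemma MT_ext {M N : MultiTableau} (h1 : M.shape = N.shape) (h2 : M.entry = N.entry) :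
    M = N := by
  cases M; cases N; cases h1; cases h2; rfl

/-- The shape of `M` truncated to entries `≤ j`. -/
def truncSh (M : MultiTableau) (j : ℕ) (t a : ℕ) : ℕ :=
  ((Finset.range (M.shape t a)).filter fun c => M.entry t a c ≤ j).card

/-- `M` truncated to entries `≤ j`. -/
def Mtrunc (M : MultiTableau) (j : ℕ) : MultiTableau where
  shape := fun t a => truncSh M j t a
  entry := fun t a b => if M.entry t a b ≤ j then M.entry t a b else 0

lemma downclosed_mem_iff {S : Finset ℕ}
    (hdc : ∀ b b', b ≤ b' → b' ∈ S → b ∈ S) {b : ℕ} : b ∈ S ↔ b < S.card := by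
  constructor
  · intro hb
    have hsub : Finset.range (b + 1) ⊆ S := fun x hx =>
      hdc x b (Nat.lt_succ_iff.1 (Finset.mem_range.1 hx)) hb
    have := Finset.card_le_card hsub
    simpa using this
  · intro hb
    by_contra hbn
    have hsub : S ⊆ Finset.range b := by
      intro x hx
      rw [Finset.mem_range]
      by_contra hxb
      push_neg at hxb
      exact hbn (hdc b x hxb hx)
    have := Finset.card_le_card hsub
    rw [Finset.card_range] at this
    omega

lemma nat_eq_of_lt_iff {x y : ℕ} (h : ∀ b, b < x ↔ b < y) : x = y := by
  rcases lt_trichotomy x y with h1 | h1 | h1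
  · have := (h x).2 h1; omega
  · exact h1
  · have := (h y).1 h1; omega

lemma lt_truncSh_iff {n ℓ s : ℕ} {M : MultiTableau} (hM : IsStandard n ℓ s M)
    {j t a b : ℕ} : b < truncSh M j t a ↔ b < M.shape t a ∧ M.entry t a b ≤ j := by
  obtain ⟨hpart, hnorm, hrange, hout, hrow, hcol, hinj, hres⟩ := hM
  rw [truncSh, ← downclosed_mem_iff, Finset.mem_filter, Finset.mem_range]
  intro b b' hbb hb'
  rw [Finset.mem_filter, Finset.mem_range] at hb' ⊢
  obtain ⟨hb1, hb2⟩ := hb'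
  refine ⟨by omega, ?_⟩
  rcases eq_or_lt_of_le hbb with rfl | hlt
  · exact hb2
  · have := hrow t a b b' hlt hb1
    omega

lemma truncSh_anti {n ℓ s : ℕ} {M : MultiTableau} (hM : IsStandard n ℓ s M)
    {j t : ℕ} : Antitone (fun a => truncSh M j t a) := by
  apply antitone_nat_of_succ_le
  intro a
  by_contra hcon
  push_neg at hcon
  have hb : truncSh M j t a < truncSh M j t (a + 1) := hcon
  have h1 := (lt_truncSh_iff hM).1 hb
  have h2 : truncSh M j t a < truncSh M j t a := by
    rw [lt_truncSh_iff hM]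
    refine ⟨lt_of_lt_of_le h1.1 ((hM.1 t).1 (Nat.le_succ a)), ?_⟩
    have := hM.2.2.2.2.2.1 t a (a + 1) (truncSh M j t a) (Nat.lt_succ_self a) h1.1
    omega
  omega

lemma truncSh_zero_of_le {n ℓ s : ℕ} {M : MultiTableau} (hM : IsStandard n ℓ s M)
    {m : ℕ} (hR : ResInRange ℓ m M) {j t a : ℕ} (ha : ℓ ≤ a) : truncSh M j t a = 0 := by
  by_contra hcon
  have h0 : (0 : ℕ) < truncSh M j t a := by omega
  have := ((lt_truncSh_iff hM).1 h0).1
  have hr := (hR t a 0 this).1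
  rw [resOf] at hr
  omega

lemma row_lt_of_mem {ℓ m : ℕ} {M : MultiTableau} (hR : ResInRange ℓ m M)
    {t a b : ℕ} (h : b < M.shape t a) : a < ℓ := by
  have h0 : InDiag (M.shape t) a 0 := by rw [InDiag]; omega
  have := (hR t a 0 h0).1
  rw [resOf] at this
  omega

lemma GoodSh_truncSh {n ℓ s : ℕ} {M : MultiTableau} (hM : IsStandard n ℓ s M)
    {m : ℕ} (hR : ResInRange ℓ m M) {j t : ℕ} :
    GoodSh ℓ (fun a => truncSh M j t a) :=
  ⟨truncSh_anti hM, fun _ ha => truncSh_zero_of_le hM hR ha⟩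

lemma Mtrunc_zero {n ℓ s : ℕ} {M : MultiTableau} (hM : IsStandard n ℓ s M) :
    Mtrunc M 0 = ⟨fun _ _ => 0, fun _ _ _ => 0⟩ := by
  apply MT_ext
  · funext t a
    show truncSh M 0 t a = 0
    by_contra hcon
    have h0 : (0 : ℕ) < truncSh M 0 t a := by omega
    have h := (lt_truncSh_iff hM).1 h0
    have := (hM.2.2.1 t a 0 h.1).1
    omega
  · funext t a b
    show (if M.entry t a b ≤ 0 then M.entry t a b else 0) = 0
    split <;> omega

lemma Mtrunc_top {n ℓ s : ℕ} {M : MultiTableau} (hM : IsStandard n ℓ s M) :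
    Mtrunc M s = M := by
  apply MT_ext
  · funext t a
    show truncSh M s t a = M.shape t a
    apply nat_eq_of_lt_iff
    intro b
    rw [lt_truncSh_iff hM]
    constructor
    · exact fun h => h.1
    · exact fun h => ⟨h, (hM.2.2.1 t a b h).2⟩
  · funext t a b
    show (if M.entry t a b ≤ s then M.entry t a b else 0) = M.entry t a b
    split
    · rfl
    · rename_i hgt
      by_cases hb : b < M.shape t a
      · exact absurd (hM.2.2.1 t a b hb).2 hgt
      · rw [hM.2.2.2.1 t a b hb]

/-- Facts about the unique node with entry `r+1` of component `t`. -/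
lemma node_facts {n ℓ s : ℕ} {M : MultiTableau} (hM : IsStandard n ℓ s M)
    {r t a₀ b₀ : ℕ} (hin : b₀ < M.shape t a₀) (he : M.entry t a₀ b₀ = r + 1) :
    truncSh M r t a₀ = b₀ ∧ truncSh M (r + 1) t a₀ = b₀ + 1 ∧
      (a₀ = 0 ∨ truncSh M r t a₀ < truncSh M r t (a₀ - 1)) := by
  obtain ⟨hpart, hnorm, hrange, hout, hrow, hcol, hinj, hres⟩ := hM
  have hM' : IsStandard n ℓ s M := ⟨hpart, hnorm, hrange, hout, hrow, hcol, hinj, hres⟩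
  have h1 : truncSh M r t a₀ = b₀ := by
    apply nat_eq_of_lt_iff
    intro b
    rw [lt_truncSh_iff hM']
    constructor
    · rintro ⟨hb1, hb2⟩
      by_contra hge
      push_neg at hge
      rcases eq_or_lt_of_le hge with rfl | hlt
      · omega
      · have := hrow t a₀ b₀ b hlt hb1; omega
    · intro hb
      have := hrow t a₀ b b₀ hb hin
      exact ⟨by omega, by omega⟩
  refine ⟨h1, ?_, ?_⟩
  · apply nat_eq_of_lt_iff
    intro b
    rw [lt_truncSh_iff hM']
    constructor
    · rintro ⟨hb1, hb2⟩
      by_contra hge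
      push_neg at hge
      have hlt : b₀ < b := by omega
      have := hrow t a₀ b₀ b hlt hb1
      omega
    · intro hb
      rcases eq_or_lt_of_le (by omega : b ≤ b₀) with rfl | hlt
      · exact ⟨hin, by omega⟩
      · have := hrow t a₀ b b₀ hlt hin
        exact ⟨by omega, by omega⟩
  · rcases Nat.eq_zero_or_pos a₀ with rfl | ha
    · exact Or.inl rfl
    · right
      rw [h1, lt_truncSh_iff hM']
      have hsh : b₀ < M.shape t (a₀ - 1) := lt_of_lt_of_le hin ((hpart t).1 (by omega))
      have := hcol t (a₀ - 1) a₀ b₀ (by omega) hin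
      exact ⟨hsh, by omega⟩

lemma truncSh_succ_eq {n ℓ s : ℕ} {M : MultiTableau} (hM : IsStandard n ℓ s M)
    {r t a : ℕ} (hno : ∀ b, b < M.shape t a → M.entry t a b ≠ r + 1) :
    truncSh M (r + 1) t a = truncSh M r t a := by
  apply nat_eq_of_lt_iff
  intro b
  rw [lt_truncSh_iff hM, lt_truncSh_iff hM]
  constructor
  · rintro ⟨h1, h2⟩
    exact ⟨h1, by have := hno b h1; omega⟩
  · rintro ⟨h1, h2⟩
    exact ⟨h1, by omega⟩

lemma trunc_shape_update {n ℓ s : ℕ} {M : MultiTableau} (hM : IsStandard n ℓ s M)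
    {r t a₀ b₀ : ℕ} (hin : b₀ < M.shape t a₀) (he : M.entry t a₀ b₀ = r + 1) :
    (fun a => truncSh M (r + 1) t a) =
      Function.update (fun a => truncSh M r t a) a₀ (b₀ + 1) := by
  funext a
  by_cases ha : a = a₀
  · subst ha
    rw [Function.update_self]
    exact (node_facts hM hin he).2.1
  · rw [Function.update_of_ne ha]
    apply truncSh_succ_eq hM
    intro b hb hcon
    exact ha (hM.2.2.2.2.2.2.1 t a b a₀ b₀ hb hin (by omega)).1

lemma entry_ne_of_notnode {n ℓ s : ℕ} {M : MultiTableau} (hM : IsStandard n ℓ s M)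
    {r t a b : ℕ} (h : ¬ (b < M.shape t a ∧ M.entry t a b = r + 1)) :
    M.entry t a b ≠ r + 1 := by
  intro hcon
  by_cases hb : b < M.shape t a
  · exact h ⟨hb, hcon⟩
  · rw [hM.2.2.2.1 t a b hb] at hcon; omega

lemma trunc_step {n ℓ s : ℕ} {M : MultiTableau} (hM : IsStandard n ℓ s M)
    {r i : ℕ} (T : Finset ℕ)
    (hT : ∀ t, t ∈ T ↔ ∃ a b, InDiag (M.shape t) a b ∧ M.entry t a b = r + 1)
    (hresT : ∀ t a b, InDiag (M.shape t) a b → M.entry t a b = r + 1 →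
      resOf ℓ a b = (i : ℤ)) :
    stepAdd ℓ (i : ℤ) (r + 1) T (Mtrunc M r) = Mtrunc M (r + 1) := by
  have key : ∀ t ∈ T, ∃ a₀ b₀, b₀ < M.shape t a₀ ∧ M.entry t a₀ b₀ = r + 1 ∧
      addRes ℓ ((Mtrunc M r).shape t) (i : ℤ) =
        Function.update (fun a => truncSh M r t a) a₀ (b₀ + 1) ∧
      truncSh M r t a₀ = b₀ := by
    intro t ht
    obtain ⟨a₀, b₀, hin, he⟩ := (hT t).1 ht
    rw [InDiag] at hin
    obtain ⟨h1, h2, hc⟩ := node_facts hM hin he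
    have hres0 : ((fun a => truncSh M r t a) a₀ : ℤ) - a₀ + ℓ = (i : ℤ) := by
      have := hresT t a₀ b₀ hin he
      rw [resOf] at this
      simp only
      omega
    have hupd := addRes_eq_update (ℓ := ℓ) (sh := fun a => truncSh M r t a)
      (truncSh_anti hM) hc hres0
    refine ⟨a₀, b₀, hin, he, ?_, h1⟩
    show addRes ℓ (fun a => truncSh M r t a) (i : ℤ) = _
    rw [hupd]
    simp only [h1]
  apply MT_ext
  · funext t
    show (if t ∈ T then addRes ℓ ((Mtrunc M r).shape t) (i : ℤ) else (Mtrunc M r).shape t)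
        = (fun a => truncSh M (r + 1) t a)
    by_cases ht : t ∈ T
    · rw [if_pos ht]
      obtain ⟨a₀, b₀, hin, he, hupd, h1⟩ := key t ht
      rw [hupd, ← trunc_shape_update hM hin he]
    · rw [if_neg ht]
      funext a
      show truncSh M r t a = truncSh M (r + 1) t a
      refine (truncSh_succ_eq hM ?_).symm
      intro b hb hcon
      exact ht ((hT t).2 ⟨a, b, hb, hcon⟩)
  · funext t a b
    show (if t ∈ T ∧ (Mtrunc M r).shape t a ≤ b ∧ b < addRes ℓ ((Mtrunc M r).shape t) (i:ℤ) a
        then r + 1 else (Mtrunc M r).entry t a b)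
        = (if M.entry t a b ≤ r + 1 then M.entry t a b else 0)
    by_cases ht : t ∈ T
    · obtain ⟨a₀, b₀, hin, he, hupd, h1⟩ := key t ht
      rw [hupd]
      by_cases hab : a = a₀ ∧ b = b₀
      · obtain ⟨rfl, rfl⟩ := hab
        rw [if_pos ⟨ht, by show truncSh M r t a ≤ b; omega,
          by rw [Function.update_self]; omega⟩, if_pos (by omega), he]
      · rw [if_neg, show (Mtrunc M r).entry t a b =
            (if M.entry t a b ≤ r then M.entry t a b else 0) from rfl]
        · have hne : M.entry t a b ≠ r + 1 := by
            apply entry_ne_of_notnode hM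
            rintro ⟨hb', he'⟩
            exact hab ⟨(hM.2.2.2.2.2.2.1 t a b a₀ b₀ hb' hin (by omega)).1,
              (hM.2.2.2.2.2.2.1 t a b a₀ b₀ hb' hin (by omega)).2⟩
          split <;> split <;> omega
        · rintro ⟨-, hb1, hb2⟩
          by_cases ha : a = a₀
          · subst ha
            rw [Function.update_self] at hb2
            have : (Mtrunc M r).shape t a = truncSh M r t a := rfl
            rw [this] at hb1
            have hbb : b = b₀ := by omega
            exact hab ⟨rfl, hbb⟩
          · rw [Function.update_of_ne ha] at hb2
            have hb1' : truncSh M r t a ≤ b := hb1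
            have hb2' : b < truncSh M r t a := hb2
            omega
    · rw [if_neg (by rintro ⟨h, -⟩; exact ht h)]
      show (if M.entry t a b ≤ r then M.entry t a b else 0) = _
      have hne : M.entry t a b ≠ r + 1 := by
        apply entry_ne_of_notnode hM
        rintro ⟨hb', he'⟩
        exact ht ((hT t).2 ⟨a, b, hb', he'⟩)
      split <;> split <;> omega

lemma iota_eq_trunc {n ℓ m s : ℕ} {M : MultiTableau} (hM : IsStandard n ℓ s M)
    (P : LadderPresentation n ℓ m s) (f : LadderFlow P) (hG : GrowthData M P f) :
    ∀ r, r ≤ s → iotaAux P f r = Mtrunc M r := by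
  intro r
  induction r with
  | zero => intro _; rw [iotaAux]; exact (Mtrunc_zero hM).symm
  | succ r ih =>
    intro hr
    have hrs : r < s := by omega
    show iotaAux P f (r + 1) = _
    rw [iotaAux, dif_pos hrs, ih (by omega)]
    apply trunc_step hM
    · intro t; exact hG.2 ⟨r, hrs⟩ t
    · intro t a b hin he
      exact (hG.1 ⟨r, hrs⟩ t a b hin he).symm

lemma part1 {n ℓ m s : ℕ} {M : MultiTableau} (hM : IsStandard n ℓ s M)
    (P : LadderPresentation n ℓ m s) (f : LadderFlow P) (hG : GrowthData M P f) :
    iotaMap P f = M := by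
  rw [iotaMap, iota_eq_trunc hM P f hG s le_rfl, Mtrunc_top hM]

/-! ### The invariant along `iotaAux` -/

lemma band_iff {sh : ℕ → ℕ} {j a b : ℕ} :
    (sh a ≤ b ∧ b < Function.update sh j (sh j + 1) a) ↔ (a = j ∧ b = sh j) := by
  by_cases ha : a = j
  · subst ha
    rw [Function.update_self]
    omega
  · rw [Function.update_of_ne ha]
    constructor
    · rintro ⟨h1, h2⟩; omega
    · rintro ⟨h, -⟩; exact absurd h ha

structure Inv {n ℓ m s : ℕ} (P : LadderPresentation n ℓ m s) (f : LadderFlow P)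
    (r : ℕ) (hr : r < s + 1) : Prop where
  good : ∀ t, GoodSh ℓ ((iotaAux P f r).shape t)
  aset : ∀ t, 1 ≤ t → t ≤ n →
    ((Finset.Icc 1 m).filter fun p => t ∈ f.S ⟨r, hr⟩ p)
      = Aset ℓ ((iotaAux P f r).shape t)
  outside : ∀ t, t < 1 ∨ n < t → ∀ a, (iotaAux P f r).shape t a = 0
  ebound : ∀ t a b, b < (iotaAux P f r).shape t a →
    1 ≤ (iotaAux P f r).entry t a b ∧ (iotaAux P f r).entry t a b ≤ r
  ezero : ∀ t a b, ¬ b < (iotaAux P f r).shape t a → (iotaAux P f r).entry t a b = 0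
  edata : ∀ t a b (e : Fin s), b < (iotaAux P f r).shape t a →
    (iotaAux P f r).entry t a b = e.val + 1 →
    resOf ℓ a b = (P.res e : ℤ) ∧ t ∈ f.T e
  occurs : ∀ (e : Fin s), e.val < r → ∀ t, t ∈ f.T e →
    ∃ a b, b < (iotaAux P f r).shape t a ∧ (iotaAux P f r).entry t a b = e.val + 1

lemma inv_zero {n ℓ m s : ℕ} (hm : ℓ + 1 ≤ m) (P : LadderPresentation n ℓ m s)
    (f : LadderFlow P) : Inv P f 0 (by omega) := by
  have hsh : ∀ t a, (iotaAux P f 0).shape t a = 0 := fun t a => rfl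
  have hen : ∀ t a b, (iotaAux P f 0).entry t a b = 0 := fun t a b => rfl
  have e0 : (⟨0, by omega⟩ : Fin (s + 1)) = 0 := rfl
  constructor
  · intro t
    exact ⟨antitone_const, fun _ _ => rfl⟩
  · intro t h1 h2
    have hA0 : Aset ℓ ((iotaAux P f 0).shape t) = Finset.Icc 1 ℓ := Aset_zero ℓ
    rw [hA0]
    ext p
    rw [Finset.mem_filter, Finset.mem_Icc, Finset.mem_Icc]
    constructor
    · rintro ⟨⟨hp1, hp2⟩, hmem⟩
      refine ⟨hp1, ?_⟩
      rw [e0, f.S_init p hp1 hp2] at hmem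
      by_contra hcon
      rw [if_neg (by omega)] at hmem
      exact absurd hmem (Finset.notMem_empty t)
    · rintro ⟨hp1, hp2⟩
      refine ⟨⟨hp1, by omega⟩, ?_⟩
      rw [e0, f.S_init p hp1 (by omega), if_pos hp2]
      rw [Finset.mem_Icc]; omega
  · intro t ht a; exact hsh t a
  · intro t a b hb; rw [hsh] at hb; omega
  · intro t a b _; exact hen t a b
  · intro t a b e hb; rw [hsh] at hb; omega
  · intro e he; omega

lemma inv_step {n ℓ m s : ℕ} {P : LadderPresentation n ℓ m s} {f : LadderFlow P}
    {r : ℕ} (hrs : r < s) (iv : Inv P f r (by omega)) : Inv P f (r + 1) (by omega) := by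
  set i := P.res ⟨r, hrs⟩ with hi
  set Tr := f.T ⟨r, hrs⟩ with hTr
  have him : 1 ≤ i ∧ i < m := ⟨P.res_pos _, P.res_lt _⟩
  have hstep : iotaAux P f (r + 1) = stepAdd ℓ (i : ℤ) (r + 1) Tr (iotaAux P f r) := by
    rw [iotaAux, dif_pos hrs]
  have hTn : ∀ t ∈ Tr, t ∈ Finset.Icc 1 n := fun t ht =>
    f.S_sub (Fin.castSucc ⟨r, hrs⟩) i (f.T_sub ⟨r, hrs⟩ ht)
  have hkey : ∀ t ∈ Tr, ∃ j, j < ℓ ∧ posOf ℓ ((iotaAux P f r).shape t) j = i ∧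
      (j = 0 ∨ (iotaAux P f r).shape t j < (iotaAux P f r).shape t (j - 1)) ∧
      addRes ℓ ((iotaAux P f r).shape t) (i : ℤ) =
        Function.update ((iotaAux P f r).shape t) j ((iotaAux P f r).shape t j + 1) := by
    intro t ht
    have htn := Finset.mem_Icc.1 (hTn t ht)
    have hiA : i ∈ Aset ℓ ((iotaAux P f r).shape t) := by
      rw [← iv.aset t htn.1 htn.2, Finset.mem_filter, Finset.mem_Icc]
      exact ⟨⟨him.1, by omega⟩, f.T_sub ⟨r, hrs⟩ ht⟩
    have hiA1 : i + 1 ∉ Aset ℓ ((iotaAux P f r).shape t) := by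
      intro hcon
      rw [← iv.aset t htn.1 htn.2, Finset.mem_filter] at hcon
      exact (Finset.disjoint_left.1 (f.T_disj ⟨r, hrs⟩)) ht hcon.2
    obtain ⟨j, hj, hpos, hc⟩ := exists_addable_row (iv.good t) him.1 hiA hiA1
    exact ⟨j, hj, hpos, hc,
      addRes_eq_update (iv.good t).anti hc (by rw [← posOf_cast hj, hpos])⟩
  have hsh : ∀ t, (iotaAux P f (r + 1)).shape t =
      (if t ∈ Tr then addRes ℓ ((iotaAux P f r).shape t) (i : ℤ)
        else (iotaAux P f r).shape t) := by
    intro t; rw [hstep]; rfl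
  have hent : ∀ t a b, (iotaAux P f (r + 1)).entry t a b =
      if t ∈ Tr ∧ (iotaAux P f r).shape t a ≤ b ∧
          b < addRes ℓ ((iotaAux P f r).shape t) (i : ℤ) a
        then r + 1 else (iotaAux P f r).entry t a b := by
    intro t a b; rw [hstep]; rfl
  have hge : ∀ t a, (iotaAux P f r).shape t a ≤ (iotaAux P f (r + 1)).shape t a := by
    intro t a
    rw [hsh t]
    split_ifs with ht
    · obtain ⟨j, hj, hpos, hc, hupd⟩ := hkey t ht
      rw [hupd]
      by_cases ha : a = j
      · subst ha; rw [Function.update_self]; omega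
      · rw [Function.update_of_ne ha]
    · exact le_rfl
  have hSsame : ∀ t, t ∉ Tr → ∀ p,
      (t ∈ f.S ⟨r + 1, by omega⟩ p ↔ t ∈ f.S ⟨r, by omega⟩ p) := by
    intro t ht p
    by_cases hp : p = i
    · subst hp
      have h1 : f.S ⟨r + 1, by omega⟩ i = f.S ⟨r, by omega⟩ i \ Tr :=
        f.S_step_res ⟨r, hrs⟩
      rw [h1, Finset.mem_sdiff]
      exact ⟨fun h => h.1, fun h => ⟨h, ht⟩⟩
    · by_cases hp1 : p = i + 1
      · subst hp1
        have h1 : f.S ⟨r + 1, by omega⟩ (i + 1) = f.S ⟨r, by omega⟩ (i + 1) ∪ Tr :=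
          f.S_step_res1 ⟨r, hrs⟩
        rw [h1, Finset.mem_union]
        exact ⟨fun h => h.resolve_right ht, fun h => Or.inl h⟩
      · have h1 : f.S ⟨r + 1, by omega⟩ p = f.S ⟨r, by omega⟩ p :=
          f.S_step_other ⟨r, hrs⟩ p hp hp1
        rw [h1]
  constructor
  · -- good
    intro t
    rw [hsh t]
    split_ifs with ht
    · obtain ⟨j, hj, hpos, hc, hupd⟩ := hkey t ht
      rw [hupd]
      exact GoodSh_update (iv.good t) hj hc
    · exact iv.good t
  · -- aset
    intro t h1 h2
    rw [hsh t]
    by_cases ht : t ∈ Tr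
    · obtain ⟨j, hj, hpos, hc, hupd⟩ := hkey t ht
      rw [if_pos ht, hupd, Aset_update (iv.good t).anti hj, hpos,
        ← iv.aset t h1 h2]
      have hres : f.S ⟨r + 1, by omega⟩ i = f.S ⟨r, by omega⟩ i \ Tr :=
        f.S_step_res ⟨r, hrs⟩
      have hres1 : f.S ⟨r + 1, by omega⟩ (i + 1) = f.S ⟨r, by omega⟩ (i + 1) ∪ Tr :=
        f.S_step_res1 ⟨r, hrs⟩
      have hoth : ∀ p, p ≠ i → p ≠ i + 1 → f.S ⟨r + 1, by omega⟩ p = f.S ⟨r, by omega⟩ p :=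
        f.S_step_other ⟨r, hrs⟩
      ext p
      simp only [Finset.mem_filter, Finset.mem_insert, Finset.mem_erase, Finset.mem_Icc]
      by_cases hp : p = i
      · subst hp
        constructor
        · rintro ⟨hIcc, hmem⟩
          have hmem' : t ∈ f.S ⟨r, by omega⟩ i \ Tr := hres ▸ hmem
          rw [Finset.mem_sdiff] at hmem'
          exact absurd ht hmem'.2
        · rintro (h | ⟨h, -⟩)
          · omega
          · omega
      · by_cases hp1 : p = i + 1
        · subst hp1
          constructor
          · intro _; exact Or.inl rfl
          · intro _
            refine ⟨⟨by omega, by omega⟩, ?_⟩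
            have : t ∈ f.S ⟨r, by omega⟩ (i + 1) ∪ Tr := Finset.mem_union_right _ ht
            rw [← hres1] at this
            exact this
        · have heq : f.S ⟨r + 1, by omega⟩ p = f.S ⟨r, by omega⟩ p := hoth p hp hp1
          constructor
          · rintro ⟨hIcc, hmem⟩
            rw [heq] at hmem
            exact Or.inr ⟨hp, hIcc, hmem⟩
          · rintro (h | ⟨-, hIcc, hmem⟩)
            · exact absurd h hp1
            · rw [← heq] at hmem
              exact ⟨hIcc, hmem⟩
    · rw [if_neg ht, ← iv.aset t h1 h2]
      ext p
      simp only [Finset.mem_filter]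
      rw [hSsame t ht p]
  · -- outside
    intro t hto a
    rw [hsh t]
    have ht : t ∉ Tr := fun h => by
      have := Finset.mem_Icc.1 (hTn t h); omega
    rw [if_neg ht]
    exact iv.outside t hto a
  · -- ebound
    intro t a b hb
    rw [hent t a b]
    by_cases ht : t ∈ Tr
    · obtain ⟨j, hj, hpos, hc, hupd⟩ := hkey t ht
      by_cases hband : a = j ∧ b = (iotaAux P f r).shape t j
      · rw [if_pos ⟨ht, by rw [hupd]; exact band_iff.2 hband⟩]
        omega
      · rw [if_neg (by rintro ⟨-, hcond⟩; rw [hupd] at hcond; exact hband (band_iff.1 hcond))]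
        have hb' : b < (iotaAux P f r).shape t a := by
          rw [hsh t, if_pos ht, hupd] at hb
          by_cases ha : a = j
          · subst ha
            rw [Function.update_self] at hb
            have : b ≠ (iotaAux P f r).shape t a := fun h => hband ⟨rfl, h⟩
            omega
          · rw [Function.update_of_ne ha] at hb
            exact hb
        have := iv.ebound t a b hb'
        omega
    · rw [if_neg (by rintro ⟨h, -⟩; exact ht h)]
      have hb' : b < (iotaAux P f r).shape t a := by
        rw [hsh t, if_neg ht] at hb; exact hb
      have := iv.ebound t a b hb'
      omega
  · -- ezero
    intro t a b hb
    rw [hent t a b]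
    have hb' : ¬ b < (iotaAux P f r).shape t a := fun h => hb (lt_of_lt_of_le h (hge t a))
    rw [if_neg, iv.ezero t a b hb']
    rintro ⟨ht, hcond⟩
    apply hb
    rw [hsh t, if_pos ht]
    exact hcond.2
  · -- edata
    intro t a b e hb he
    rw [hent t a b] at he
    by_cases hcond : t ∈ Tr ∧ (iotaAux P f r).shape t a ≤ b ∧
        b < addRes ℓ ((iotaAux P f r).shape t) (i : ℤ) a
    · rw [if_pos hcond] at he
      have hev : e = ⟨r, hrs⟩ := Fin.ext (show e.val = r by omega)
      obtain ⟨j, hj, hpos, hc, hupd⟩ := hkey t hcond.1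
      have hband : a = j ∧ b = (iotaAux P f r).shape t j := by
        apply band_iff.1
        rw [← hupd]
        exact hcond.2
      obtain ⟨rfl, rfl⟩ := hband
      subst hev
      refine ⟨?_, hcond.1⟩
      rw [resOf, ← hi, ← posOf_cast hj, hpos]
    · rw [if_neg hcond] at he
      have hb' : b < (iotaAux P f r).shape t a := by
        rcases Nat.lt_or_ge b ((iotaAux P f r).shape t a) with h | h
        · exact h
        · exfalso
          have := iv.ezero t a b (by omega)
          rw [this] at he
          omega
      exact iv.edata t a b e hb' he
  · -- occurs
    intro e he t ht'
    by_cases hev : e.val = r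
    · have hee : e = ⟨r, hrs⟩ := Fin.ext hev
      rw [hee] at ht'
      obtain ⟨j, hj, hpos, hc, hupd⟩ := hkey t ht'
      refine ⟨j, (iotaAux P f r).shape t j, ?_, ?_⟩
      · rw [hsh t, if_pos ht', hupd, Function.update_self]
        omega
      · rw [hent, if_pos ⟨ht', by rw [hupd]; exact band_iff.2 ⟨rfl, rfl⟩⟩, hee]
    · obtain ⟨a, b, hb, heq⟩ := iv.occurs e (by omega) t ht'
      refine ⟨a, b, lt_of_lt_of_le hb (hge t a), ?_⟩
      rw [hent, if_neg]
      · exact heq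
      · rintro ⟨-, h1, -⟩
        omega

lemma inv_all {n ℓ m s : ℕ} (hm : ℓ + 1 ≤ m) (P : LadderPresentation n ℓ m s)
    (f : LadderFlow P) : ∀ r, (hr : r < s + 1) → Inv P f r hr := by
  intro r
  induction r with
  | zero => intro hr; exact inv_zero hm P f
  | succ r ih =>
    intro hr
    exact inv_step (by omega) (ih (by omega))

lemma part2a {n ℓ m s : ℕ} (hm : ℓ + 1 ≤ m) (P : LadderPresentation n ℓ m s)
    (f : LadderFlow P) : GrowthData (iotaMap P f) P f := by
  have iv := inv_all hm P f s (by omega)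
  constructor
  · intro e t a b hb he
    exact (iv.edata t a b e hb he).1.symm
  · intro e t
    constructor
    · intro ht
      obtain ⟨a, b, hb, heq⟩ := iv.occurs e e.isLt t ht
      exact ⟨a, b, hb, heq⟩
    · rintro ⟨a, b, hb, heq⟩
      exact (iv.edata t a b e hb heq).2

lemma LP_ext {n ℓ m s : ℕ} {P Q : LadderPresentation n ℓ m s}
    (h1 : P.res = Q.res) (h2 : P.mult = Q.mult) : P = Q := by
  cases P; cases Q
  simp only at h1 h2
  subst h1; subst h2
  rfl

lemma LF_ext {n ℓ m s : ℕ} {P : LadderPresentation n ℓ m s} {f g : LadderFlow P}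
    (h1 : f.S = g.S) (h2 : f.T = g.T) : f = g := by
  cases f; cases g
  simp only at h1 h2
  subst h1; subst h2
  rfl

lemma growth_unique {n ℓ m s : ℕ} {M : MultiTableau}
    {P : LadderPresentation n ℓ m s} {f : LadderFlow P}
    {P' : LadderPresentation n ℓ m s} {f' : LadderFlow P'}
    (hG : GrowthData M P f) (hG' : GrowthData M P' f')
    (hocc : ∀ e : Fin s, ∃ t a b, InDiag (M.shape t) a b ∧ M.entry t a b = e.val + 1) :
    P' = P ∧ HEq f' f := by
  have hres : ∀ e : Fin s, P'.res e = P.res e := by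
    intro e
    obtain ⟨t, a, b, hb, he⟩ := hocc e
    have h1 := hG.1 e t a b hb he
    have h2 := hG'.1 e t a b hb he
    omega
  have hT : ∀ e : Fin s, f'.T e = f.T e := by
    intro e
    ext t
    rw [hG'.2 e t, hG.2 e t]
  have hmult : ∀ e : Fin s, P'.mult e = P.mult e := by
    intro e
    rw [← f'.T_card e, ← f.T_card e, hT e]
  have hPP : P' = P := LP_ext (funext hres) (funext hmult)
  subst hPP
  refine ⟨rfl, heq_of_eq ?_⟩
  have hS : ∀ (r : ℕ) (h : r < s + 1) p, f'.S ⟨r, h⟩ p = f.S ⟨r, h⟩ p := by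
    intro r
    induction r with
    | zero =>
      intro h p
      by_cases hp : 1 ≤ p ∧ p ≤ m
      · rw [show (⟨0, h⟩ : Fin (s+1)) = 0 from rfl,
          f'.S_init p hp.1 hp.2, f.S_init p hp.1 hp.2]
      · rw [show (⟨0, h⟩ : Fin (s+1)) = 0 from rfl,
          f'.S_outside 0 p (by omega), f.S_outside 0 p (by omega)]
    | succ r ih =>
      intro h p
      have hrs : r < s := by omega
      by_cases hp : p = P'.res ⟨r, hrs⟩
      · subst hp
        have e1 : f'.S ⟨r + 1, h⟩ (P'.res ⟨r, hrs⟩)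
            = f'.S ⟨r, by omega⟩ (P'.res ⟨r, hrs⟩) \ f'.T ⟨r, hrs⟩ :=
          f'.S_step_res ⟨r, hrs⟩
        have e2 : f.S ⟨r + 1, h⟩ (P'.res ⟨r, hrs⟩)
            = f.S ⟨r, by omega⟩ (P'.res ⟨r, hrs⟩) \ f.T ⟨r, hrs⟩ :=
          f.S_step_res ⟨r, hrs⟩
        rw [e1, e2, ih (by omega), hT]
      · by_cases hp1 : p = P'.res ⟨r, hrs⟩ + 1
        · subst hp1
          have e1 : f'.S ⟨r + 1, h⟩ (P'.res ⟨r, hrs⟩ + 1)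
              = f'.S ⟨r, by omega⟩ (P'.res ⟨r, hrs⟩ + 1) ∪ f'.T ⟨r, hrs⟩ :=
            f'.S_step_res1 ⟨r, hrs⟩
          have e2 : f.S ⟨r + 1, h⟩ (P'.res ⟨r, hrs⟩ + 1)
              = f.S ⟨r, by omega⟩ (P'.res ⟨r, hrs⟩ + 1) ∪ f.T ⟨r, hrs⟩ :=
            f.S_step_res1 ⟨r, hrs⟩
          rw [e1, e2, ih (by omega), hT]
        · have e1 : f'.S ⟨r + 1, h⟩ p = f'.S ⟨r, by omega⟩ p :=
            f'.S_step_other ⟨r, hrs⟩ p hp hp1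
          have e2 : f.S ⟨r + 1, h⟩ p = f.S ⟨r, by omega⟩ p :=
            f.S_step_other ⟨r, hrs⟩ p hp hp1
          rw [e1, e2, ih (by omega)]
  apply LF_ext
  · funext rr p
    exact hS rr.val rr.isLt p
  · funext e
    exact hT e

/-! ### The growth map: constructing the ladder presentation and flow -/

lemma truncSh_zero_j {n ℓ s : ℕ} {M : MultiTableau} (hM : IsStandard n ℓ s M)
    {t a : ℕ} : truncSh M 0 t a = 0 := by
  by_contra hcon
  have h0 : (0 : ℕ) < truncSh M 0 t a := by omega
  have h := (lt_truncSh_iff hM).1 h0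
  have := (hM.2.2.1 t a 0 h.1).1
  omega

lemma Aset_trunc_bounds {n ℓ m s : ℕ} {M : MultiTableau} (hM : IsStandard n ℓ s M)
    (hR : ResInRange ℓ m M) (hm : ℓ + 1 ≤ m) {j t v : ℕ}
    (hv : v ∈ Aset ℓ (fun a => truncSh M j t a)) : 1 ≤ v ∧ v ≤ m := by
  obtain ⟨a, ha, he⟩ := mem_Aset.1 hv
  have hp : 1 ≤ posOf ℓ (fun a => truncSh M j t a) a := posOf_pos ha
  have hpv : truncSh M j t a + (ℓ - a) = v := he
  refine ⟨by omega, ?_⟩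
  by_cases h0 : truncSh M j t a = 0
  · omega
  · have hlt : truncSh M j t a - 1 < truncSh M j t a := by omega
    have hd := ((lt_truncSh_iff hM).1 hlt).1
    have hres := (hR t a (truncSh M j t a - 1) hd).2
    rw [resOf] at hres
    omega

lemma comp_in_range {n ℓ s : ℕ} {M : MultiTableau} (hM : IsStandard n ℓ s M)
    {t a b : ℕ} (h : b < M.shape t a) : 1 ≤ t ∧ t ≤ n := by
  by_contra hcon
  have := hM.2.1 t (by omega) a
  omega

lemma compsWith_iff {n ℓ s : ℕ} {M : MultiTableau} (hM : IsStandard n ℓ s M)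
    {j t : ℕ} : t ∈ compsWith n M j ↔ ∃ a b, b < M.shape t a ∧ M.entry t a b = j := by
  rw [compsWith, Finset.mem_filter, Finset.mem_Icc]
  constructor
  · rintro ⟨-, a, b, hb, he⟩
    exact ⟨a, b, hb, he⟩
  · rintro ⟨a, b, hb, he⟩
    exact ⟨comp_in_range hM hb, a, b, hb, he⟩

/-- The abacus move corresponding to passing from level `r` to level `r+1`. -/
lemma trunc_move {n ℓ m s : ℕ} {M : MultiTableau} (hM : IsStandard n ℓ s M)
    (hR : ResInRange ℓ m M) {r i t : ℕ}
    (hresall : ∀ t' a b, b < M.shape t' a → M.entry t' a b = r + 1 →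
      resOf ℓ a b = (i : ℤ)) :
    ((∃ a b, b < M.shape t a ∧ M.entry t a b = r + 1) →
        i ∈ Aset ℓ (fun a => truncSh M r t a) ∧
        i + 1 ∉ Aset ℓ (fun a => truncSh M r t a) ∧
        Aset ℓ (fun a => truncSh M (r + 1) t a)
          = insert (i + 1) ((Aset ℓ (fun a => truncSh M r t a)).erase i)) ∧
    ((¬ ∃ a b, b < M.shape t a ∧ M.entry t a b = r + 1) →
        Aset ℓ (fun a => truncSh M (r + 1) t a) = Aset ℓ (fun a => truncSh M r t a)) := by
  constructor
  · rintro ⟨a₀, b₀, hin, he⟩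
    obtain ⟨h1, h2, hc⟩ := node_facts hM hin he
    have ha₀ : a₀ < ℓ := row_lt_of_mem hR hin
    have hposi : posOf ℓ (fun a => truncSh M r t a) a₀ = i := by
      have hri := hresall t a₀ b₀ hin he
      rw [resOf] at hri
      have hpe : truncSh M r t a₀ + (ℓ - a₀) = posOf ℓ (fun a => truncSh M r t a) a₀ := rfl
      omega
    have hiA : i ∈ Aset ℓ (fun a => truncSh M r t a) := mem_Aset.2 ⟨a₀, ha₀, hposi⟩
    have hiA1 : i + 1 ∉ Aset ℓ (fun a => truncSh M r t a) := by
      have := corner_succ_not_mem (GoodSh_truncSh hM hR) ha₀ hc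
      rw [hposi] at this
      exact this
    refine ⟨hiA, hiA1, ?_⟩
    have e1 : (fun a => truncSh M r t a) a₀ + 1 = b₀ + 1 := by
      show truncSh M r t a₀ + 1 = b₀ + 1
      omega
    have hupd2 : (fun a => truncSh M (r + 1) t a) =
        Function.update (fun a => truncSh M r t a) a₀
          ((fun a => truncSh M r t a) a₀ + 1) := by
      rw [trunc_shape_update hM hin he, ← e1]
    rw [hupd2, Aset_update (truncSh_anti hM) ha₀, hposi]
  · intro hno
    have heq : (fun a => truncSh M (r + 1) t a) = (fun a => truncSh M r t a) := by
      funext a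
      apply truncSh_succ_eq hM
      intro b hb hcon
      exact hno ⟨a, b, hb, hcon⟩
    rw [heq]

/-- Boundary labels of the growth map. -/
def gS (n ℓ : ℕ) (M : MultiTableau) (r p : ℕ) : Finset ℕ :=
  (Finset.Icc 1 n).filter fun t => p ∈ Aset ℓ (fun a => truncSh M r t a)

section gSlemmas

variable {n ℓ m s : ℕ} {M : MultiTableau}

lemma gT_sub (hM : IsStandard n ℓ s M) (hR : ResInRange ℓ m M) {r i : ℕ}
    (hresall : ∀ t' a b, b < M.shape t' a → M.entry t' a b = r + 1 →
      resOf ℓ a b = (i : ℤ)) :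
    compsWith n M (r + 1) ⊆ gS n ℓ M r i := by
  intro t ht
  refine Finset.mem_filter.2 ⟨Finset.mem_of_mem_filter t ht, ?_⟩
  exact ((trunc_move hM hR hresall (t := t)).1 ((compsWith_iff hM).1 ht)).1

lemma gT_disj (hM : IsStandard n ℓ s M) (hR : ResInRange ℓ m M) {r i : ℕ}
    (hresall : ∀ t' a b, b < M.shape t' a → M.entry t' a b = r + 1 →
      resOf ℓ a b = (i : ℤ)) :
    Disjoint (compsWith n M (r + 1)) (gS n ℓ M r (i + 1)) := by
  rw [Finset.disjoint_left]
  intro t ht hmem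
  exact ((trunc_move hM hR hresall (t := t)).1 ((compsWith_iff hM).1 ht)).2.1
    (Finset.mem_filter.1 hmem).2

lemma gS_step1 (hM : IsStandard n ℓ s M) (hR : ResInRange ℓ m M) {r i : ℕ}
    (hresall : ∀ t' a b, b < M.shape t' a → M.entry t' a b = r + 1 →
      resOf ℓ a b = (i : ℤ)) :
    gS n ℓ M (r + 1) i = gS n ℓ M r i \ compsWith n M (r + 1) := by
  ext t
  simp only [gS, Finset.mem_filter, Finset.mem_sdiff]
  by_cases hc : t ∈ compsWith n M (r + 1)
  · have hmv := (trunc_move hM hR hresall (t := t)).1 ((compsWith_iff hM).1 hc)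
    rw [hmv.2.2]
    constructor
    · rintro ⟨-, hmem⟩
      rcases Finset.mem_insert.1 hmem with h | h
      · omega
      · exact absurd rfl (Finset.mem_erase.1 h).1
    · rintro ⟨-, hnc⟩
      exact absurd hc hnc
  · have hmv := (trunc_move hM hR hresall (t := t)).2
      (fun hex => hc ((compsWith_iff hM).2 hex))
    rw [hmv]
    constructor
    · rintro ⟨h1, h2⟩; exact ⟨⟨h1, h2⟩, hc⟩
    · rintro ⟨⟨h1, h2⟩, -⟩; exact ⟨h1, h2⟩

lemma gS_step2 (hM : IsStandard n ℓ s M) (hR : ResInRange ℓ m M) {r i : ℕ}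
    (hresall : ∀ t' a b, b < M.shape t' a → M.entry t' a b = r + 1 →
      resOf ℓ a b = (i : ℤ)) :
    gS n ℓ M (r + 1) (i + 1) = gS n ℓ M r (i + 1) ∪ compsWith n M (r + 1) := by
  ext t
  by_cases hc : t ∈ compsWith n M (r + 1)
  · have hIcc : t ∈ Finset.Icc 1 n := Finset.mem_of_mem_filter t hc
    have hmv := (trunc_move hM hR hresall (t := t)).1 ((compsWith_iff hM).1 hc)
    constructor
    · intro _
      exact Finset.mem_union_right _ hc
    · intro _
      refine Finset.mem_filter.2 ⟨hIcc, ?_⟩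
      rw [hmv.2.2]
      exact Finset.mem_insert_self _ _
  · have hmv := (trunc_move hM hR hresall (t := t)).2
      (fun hex => hc ((compsWith_iff hM).2 hex))
    constructor
    · intro h
      obtain ⟨hIcc, hmem⟩ := Finset.mem_filter.1 h
      rw [hmv] at hmem
      exact Finset.mem_union_left _ (Finset.mem_filter.2 ⟨hIcc, hmem⟩)
    · intro h
      rcases Finset.mem_union.1 h with h | h
      · obtain ⟨hIcc, hmem⟩ := Finset.mem_filter.1 h
        refine Finset.mem_filter.2 ⟨hIcc, ?_⟩
        rw [hmv]
        exact hmem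
      · exact absurd h hc

lemma gS_step3 (hM : IsStandard n ℓ s M) (hR : ResInRange ℓ m M) {r i : ℕ}
    (hresall : ∀ t' a b, b < M.shape t' a → M.entry t' a b = r + 1 →
      resOf ℓ a b = (i : ℤ)) {p : ℕ} (hp : p ≠ i) (hp1 : p ≠ i + 1) :
    gS n ℓ M (r + 1) p = gS n ℓ M r p := by
  ext t
  simp only [gS, Finset.mem_filter]
  by_cases hc : t ∈ compsWith n M (r + 1)
  · have hmv := (trunc_move hM hR hresall (t := t)).1 ((compsWith_iff hM).1 hc)
    rw [hmv.2.2]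
    constructor
    · rintro ⟨h1, hmem⟩
      rcases Finset.mem_insert.1 hmem with h | h
      · exact absurd h hp1
      · exact ⟨h1, (Finset.mem_erase.1 h).2⟩
    · rintro ⟨h1, hmem⟩
      exact ⟨h1, Finset.mem_insert_of_mem (Finset.mem_erase.2 ⟨hp, hmem⟩)⟩
  · have hmv := (trunc_move hM hR hresall (t := t)).2
      (fun hex => hc ((compsWith_iff hM).2 hex))
    rw [hmv]

lemma gS_init (hM : IsStandard n ℓ s M) (hm : ℓ + 1 ≤ m) {p : ℕ} (h1 : 1 ≤ p) :
    gS n ℓ M 0 p = if p ≤ ℓ then Finset.Icc 1 n else ∅ := by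
  have hA0 : ∀ t : ℕ, Aset ℓ (fun a => truncSh M 0 t a) = Finset.Icc 1 ℓ := by
    intro t
    have : (fun a => truncSh M 0 t a) = (fun _ => 0) := by
      funext a; exact truncSh_zero_j hM
    rw [this, Aset_zero]
  rw [gS]
  split_ifs with hp
  · apply Finset.filter_true_of_mem
    intro t _
    rw [hA0, Finset.mem_Icc]
    omega
  · apply Finset.filter_false_of_mem
    intro t _
    rw [hA0, Finset.mem_Icc]
    omega

lemma gS_outside (hM : IsStandard n ℓ s M) (hR : ResInRange ℓ m M) (hm : ℓ + 1 ≤ m) {r p : ℕ} (hp : p = 0 ∨ m < p) :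
    gS n ℓ M r p = ∅ := by
  apply Finset.filter_false_of_mem
  intro t _
  intro hcon
  have := Aset_trunc_bounds hM hR hm hcon
  omega

end gSlemmas

lemma part3 {n ℓ m s : ℕ} (hm : ℓ + 1 ≤ m) {M : MultiTableau}
    (hM : IsStandard n ℓ s M) (hA : AllEntriesOccur s M) (hR : ResInRange ℓ m M) :
    ∃! Pf : (Σ' P : LadderPresentation n ℓ m s, LadderFlow P),
      IsValid Pf.1 ∧ iotaMap Pf.1 Pf.2 = M := by
  have hchoice : ∀ e : Fin s, ∃ t a b, InDiag (M.shape t) a b ∧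
      M.entry t a b = e.val + 1 :=
    fun e => hA (e.val + 1) (by omega) (by omega)
  choose ct ca cb hcin hce using hchoice
  have hcin' : ∀ e : Fin s, cb e < M.shape (ct e) (ca e) := fun e => hcin e
  have hcR : ∀ e : Fin s, 1 ≤ resOf ℓ (ca e) (cb e) ∧
      resOf ℓ (ca e) (cb e) ≤ (m : ℤ) - 1 :=
    fun e => hR (ct e) (ca e) (cb e) (hcin e)
  have hiFc : ∀ e : Fin s, (((resOf ℓ (ca e) (cb e)).toNat : ℤ)) = resOf ℓ (ca e) (cb e) :=
    fun e => Int.toNat_of_nonneg (by have := (hcR e).1; omega)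
  set iF : Fin s → ℕ := fun e => (resOf ℓ (ca e) (cb e)).toNat with hiFdef
  have him : ∀ e, 1 ≤ iF e ∧ iF e < m := by
    intro e
    have h1 := (hcR e).1
    have h2 := (hcR e).2
    have h3 : (iF e : ℤ) = resOf ℓ (ca e) (cb e) := hiFc e
    constructor <;> omega
  have hcommon : ∀ (e : Fin s) t a b, b < M.shape t a → M.entry t a b = e.val + 1 →
      resOf ℓ a b = (iF e : ℤ) := by
    intro e t a b hb he
    rw [hiFc e]
    exact hM.2.2.2.2.2.2.2 t a b (ct e) (ca e) (cb e) hb (hcin e) (by rw [he, hce e])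
  have hmultpos : ∀ e : Fin s, 1 ≤ (compsWith n M (e.val + 1)).card := fun e =>
    Finset.card_pos.2 ⟨ct e, (compsWith_iff hM).2 ⟨ca e, cb e, hcin' e, hce e⟩⟩
  have hmultle : ∀ e : Fin s, (compsWith n M (e.val + 1)).card ≤ n := by
    intro e
    have h1 : (compsWith n M (e.val + 1)).card ≤ (Finset.Icc 1 n).card :=
      Finset.card_filter_le _ _
    rw [Nat.card_Icc] at h1
    omega
  set P₀ : LadderPresentation n ℓ m s :=
    ⟨iF, fun e => (compsWith n M (e.val + 1)).card,
      fun e => (him e).1, fun e => (him e).2, hmultpos, hmultle⟩ with hP₀def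
  have hTsub : ∀ (r : ℕ) (hrs : r < s),
      compsWith n M (r + 1) ⊆ gS n ℓ M r (iF ⟨r, hrs⟩) :=
    fun r hrs => gT_sub hM hR (r := r) (hcommon ⟨r, hrs⟩)
  have hTdisj : ∀ (r : ℕ) (hrs : r < s),
      Disjoint (compsWith n M (r + 1)) (gS n ℓ M r (iF ⟨r, hrs⟩ + 1)) :=
    fun r hrs => gT_disj hM hR (r := r) (hcommon ⟨r, hrs⟩)
  have hcard : ∀ r, r < s + 1 → ∀ p, 1 ≤ p → p ≤ m →
      ((gS n ℓ M r p).card : ℤ) = wtSeq P₀ r p := by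
    intro r
    induction r with
    | zero =>
      intro _ p h1 h2
      rw [gS_init hM hm h1, wtSeq]
      by_cases hp : p ≤ ℓ
      · rw [if_pos hp, if_pos ⟨h1, hp⟩, Nat.card_Icc]
        push_cast
        omega
      · rw [if_neg hp, if_neg (by omega), Finset.card_empty]
        simp
    | succ r ih =>
      intro hr p h1 h2
      have hrs : r < s := by omega
      rw [wtSeq, dif_pos hrs]
      have hre : P₀.res ⟨r, hrs⟩ = iF ⟨r, hrs⟩ := rfl
      have hmu : P₀.mult ⟨r, hrs⟩ = (compsWith n M (r + 1)).card := rfl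
      rw [hre, hmu]
      by_cases hp : p = iF ⟨r, hrs⟩
      · subst hp
        rw [if_pos rfl, if_neg (by omega),
          gS_step1 hM hR (r := r) (i := iF ⟨r, hrs⟩) (hcommon ⟨r, hrs⟩),
          Finset.card_sdiff_of_subset (hTsub r hrs),
          Nat.cast_sub (Finset.card_le_card (hTsub r hrs)),
          ih (by omega) _ (him ⟨r, hrs⟩).1 (le_of_lt (him ⟨r, hrs⟩).2)]
        omega
      · by_cases hp1 : p = iF ⟨r, hrs⟩ + 1
        · subst hp1
          rw [if_neg (by omega), if_pos rfl,
            gS_step2 hM hR (r := r) (i := iF ⟨r, hrs⟩) (hcommon ⟨r, hrs⟩),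
            Finset.card_union_of_disjoint ((hTdisj r hrs).symm)]
          push_cast
          rw [ih (by omega) _ (by omega) (by have := (him ⟨r, hrs⟩).2; omega)]
          omega
        · rw [if_neg hp, if_neg hp1,
            gS_step3 hM hR (r := r) (i := iF ⟨r, hrs⟩) (hcommon ⟨r, hrs⟩) hp hp1,
            ih (by omega) p h1 h2]
          omega
  have hvalid : IsValid P₀ := by
    intro r hr p h1 h2
    rw [← hcard r (by omega) p h1 h2]
    constructor
    · exact Int.natCast_nonneg _
    · have hle : (gS n ℓ M r p).card ≤ n := by
        have h3 : (gS n ℓ M r p).card ≤ (Finset.Icc 1 n).card :=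
          Finset.card_filter_le _ _
        rw [Nat.card_Icc] at h3
        omega
      exact_mod_cast hle
  let f₀ : LadderFlow P₀ :=
    { S := fun rr p => gS n ℓ M rr.val p
      T := fun e => compsWith n M (e.val + 1)
      S_sub := fun rr p => Finset.filter_subset _ _
      S_outside := fun rr p hp => gS_outside hM hR hm hp
      S_card := fun rr p h1 h2 => hcard rr.val rr.isLt p h1 h2
      S_init := fun p h1 h2 => gS_init hM hm h1
      T_sub := fun e => hTsub e.val e.isLt
      T_card := fun e => rfl
      T_disj := fun e => hTdisj e.val e.isLt
      S_step_res := fun e => gS_step1 hM hR (r := e.val) (i := iF e) (hcommon e)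
      S_step_res1 := fun e => gS_step2 hM hR (r := e.val) (i := iF e) (hcommon e)
      S_step_other := fun e p hp hp1 =>
        gS_step3 hM hR (r := e.val) (i := iF e) (hcommon e) hp hp1 }
  have hG₀ : GrowthData M P₀ f₀ :=
    ⟨fun e t a b hb he => (hcommon e t a b hb he).symm,
     fun e t => compsWith_iff hM⟩
  have hio : iotaMap P₀ f₀ = M := part1 hM P₀ f₀ hG₀
  refine ⟨⟨P₀, f₀⟩, ⟨hvalid, hio⟩, ?_⟩
  rintro ⟨Py, fy⟩ ⟨hVy, hIy⟩
  have hGy : GrowthData M Py fy := hIy ▸ part2a hm Py fy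
  obtain ⟨hPP, hff⟩ := growth_unique hGy hG₀
    (fun e => ⟨ct e, ca e, cb e, hcin e, hce e⟩)
  subst hPP
  exact congrArg (PSigma.mk P₀) (eq_of_heq hff).symm
/-!
STATEMENT 2: The maps `ι` and `g` are mutually inverse bijections:
`ι(g(T)) = T` for every standard `n`-multitableau `T` with entries in
`{1,…,s}`, each entry occurring, all residues in `{1,…,m−1}`; and
`g(ι(P,f)) = (P,f)` for every flow `f` on a valid ladder presentation `P` of
length `s`.  Hence `ι` is a bijection between the set of pairs (valid ladder
presentation of length `s`, flow on it) and the set of such multitableaux.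
-/
theorem iota_growth_mutually_inverse (n ℓ m : ℕ) (hn : 2 ≤ n) (hℓ : 1 ≤ ℓ)
    (hm : ℓ + 1 ≤ m) (s : ℕ) :
    (∀ M : MultiTableau, IsStandard n ℓ s M → AllEntriesOccur s M →
      ResInRange ℓ m M →
      ∀ (P : LadderPresentation n ℓ m s) (f : LadderFlow P),
        GrowthData M P f → iotaMap P f = M) ∧
    (∀ (P : LadderPresentation n ℓ m s), IsValid P → ∀ f : LadderFlow P,
      GrowthData (iotaMap P f) P f ∧
      ∀ (P' : LadderPresentation n ℓ m s) (f' : LadderFlow P'),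
        GrowthData (iotaMap P f) P' f' → P' = P ∧ HEq f' f) ∧
    (∀ M : MultiTableau, IsStandard n ℓ s M → AllEntriesOccur s M →
      ResInRange ℓ m M →
      ∃! Pf : (Σ' P : LadderPresentation n ℓ m s, LadderFlow P),
        IsValid Pf.1 ∧ iotaMap Pf.1 Pf.2 = M) := by
  refine ⟨?_, ?_, ?_⟩
  · intro M hM _ _ P f hG
    exact part1 hM P f hG
  · intro P _ f
    refine ⟨part2a hm P f, ?_⟩
    intro P' f' hG'
    have hocc : ∀ e : Fin s, ∃ t a b, InDiag ((iotaMap P f).shape t) a b ∧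
        (iotaMap P f).entry t a b = e.val + 1 := by
      intro e
      have iv := inv_all hm P f s (by omega)
      obtain ⟨t, ht⟩ := Finset.card_pos.1 (by rw [f.T_card e]; exact P.mult_pos e)
      obtain ⟨a, b, hb, heq⟩ := iv.occurs e e.isLt t ht
      exact ⟨t, a, b, hb, heq⟩
    exact growth_unique (part2a hm P f) hG' hocc
  · intro M hM hA hR
    exact part3 hm hM hA hR

end

end SlnWeb
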